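/- Let G be a graph, U a homogeneous set in G, uv an edge of G with both endpoints in U, and xy an edge of G with x ∉ U. Then uv and xy lie in distinct connected components of the Gallai graph Γ(G). -/

import Mathlib

/-! A Gallai edge `s(a, b) ~ s(a, c)` with `a, b ∈ U` and `b, c` non-adjacent cannot leave `U`:
if `c ∉ U`, homogeneity forces `c` to see `a` and `b` alike, so `c` would be adjacent to `b`.
Hence the edges inside a homogeneous set form a union of components of `Γ(G)`. -/

open SimpleGraph

/-- The Gallai graph of `G`: vertices are the edges of `G`; two distinct edges are
adjacent iff they share an endpoint but do not span a triangle in `G`. -/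
def SimpleGraph.gallai {V : Type*} (G : SimpleGraph V) : SimpleGraph G.edgeSet where
  Adj e f := e ≠ f ∧ ∃ a b c : V, (e : Sym2 V) = s(a, b) ∧ (f : Sym2 V) = s(a, c) ∧ ¬ G.Adj b c
  symm := by
    constructor
    rintro e f ⟨hne, a, b, c, he, hf, h⟩
    exact ⟨hne.symm, a, c, b, hf, he, fun h' => h h'.symm⟩
  loopless := ⟨fun e h => h.1 rfl⟩

/-- The line graph of `G`: vertices are the edges of `G`; two distinct edges are
adjacent iff they share an endpoint. -/
def SimpleGraph.lineGraph' {V : Type*} (G : SimpleGraph V) : SimpleGraph G.edgeSet where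
  Adj e f := e ≠ f ∧ ∃ a : V, a ∈ (e : Sym2 V) ∧ a ∈ (f : Sym2 V)
  symm := ⟨by rintro e f ⟨hne, a, h1, h2⟩; exact ⟨hne.symm, a, h2, h1⟩⟩
  loopless := ⟨fun e h => h.1 rfl⟩

/-- `G` contains an induced copy of `H`. -/
def HasInducedCopy {α V : Type*} (H : SimpleGraph α) (G : SimpleGraph V) : Prop :=
  ∃ f : α ↪ V, ∀ a b : α, H.Adj a b ↔ G.Adj (f a) (f b)

/-- A graph is chordal if it has no induced cycle of length at least 4. -/
def SimpleGraph.Chordal {V : Type*} (G : SimpleGraph V) : Prop :=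
  ∀ n : ℕ, 4 ≤ n → ¬ HasInducedCopy (SimpleGraph.cycleGraph n) G

/-- The graph on `Fin n` with the given list of edges. -/
def graphOfList (n : ℕ) (l : List (Fin n × Fin n)) : SimpleGraph (Fin n) :=
  SimpleGraph.fromRel (fun i j => (i, j) ∈ l)

/-- `F₁`, the claw `K_{1,3}`. -/
def F1 : SimpleGraph (Fin 4) := graphOfList 4 [(0,3),(1,3),(2,3)]

/-- `F₂`, the bowtie: two triangles sharing one vertex. -/
def F2 : SimpleGraph (Fin 5) := graphOfList 5 [(0,1),(0,4),(1,4),(2,3),(2,4),(3,4)]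

/-- `F₃`, the octahedron `K_{2,2,2}`. -/
def F3 : SimpleGraph (Fin 6) := SimpleGraph.fromRel (fun i j => (i.val + 3) % 6 ≠ j.val)

/-- `F₄`: a path `0-1-2-3`, a vertex `4` adjacent to `1,2`, and a pendant `5` adjacent to `4`. -/
def F4 : SimpleGraph (Fin 6) := graphOfList 6 [(0,1),(1,2),(2,3),(1,4),(2,4),(4,5)]

/-- `F₅`: the gem on `{0,1,2,3,4}` (path `0-3-4-2` dominated by `1`) plus vertex `5`
adjacent to the two top vertices `3,4`. -/
def F5 : SimpleGraph (Fin 6) :=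
  graphOfList 6 [(0,1),(1,2),(2,4),(4,5),(5,3),(3,0),(1,3),(3,4),(4,1)]

/-- `F₆`: a path `0-1-2-3-4` plus a vertex `5` adjacent to the internal vertices `1,2,3`. -/
def F6 : SimpleGraph (Fin 6) := graphOfList 6 [(0,1),(1,2),(2,3),(3,4),(1,5),(2,5),(3,5)]

/-- `F₇`: a path `0-1-2-3-4-5` plus a vertex `6` adjacent to the internal vertices `1,2,3,4`. -/
def F7 : SimpleGraph (Fin 7) :=
  graphOfList 7 [(0,1),(1,2),(2,3),(3,4),(4,5),(1,6),(2,6),(3,6),(4,6)]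

/-- `F₈`: a path `0-1-2-3`, vertices `4` adjacent to `0,1`, `5` adjacent to `1,2`,
`6` adjacent to `2,3`, and the path `4-5-6`. -/
def F8 : SimpleGraph (Fin 7) :=
  graphOfList 7 [(0,1),(1,2),(2,3),(3,6),(6,5),(5,4),(4,0),(4,1),(1,5),(5,2),(2,6)]

/-- `F₉`: vertices `x₁,x₂,x₃ = 0,1,2`, `y₁,y₂,y₃ = 3,4,5`, `z = 6`. -/
def F9 : SimpleGraph (Fin 7) :=
  graphOfList 7 [(0,1),(1,2),(3,4),(4,5),(0,3),(1,3),(1,4),(2,4),(2,5),(1,6),(2,6),(3,6),(4,6)]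

/-- `F₈⁻`: the 6-cycle `a b e f c d = 0 1 2 3 4 5` with chords `db, bc, ce`. -/
def F8minus : SimpleGraph (Fin 6) :=
  graphOfList 6 [(0,1),(1,2),(2,3),(3,4),(4,5),(5,0),(5,1),(1,4),(4,2)]

/-- The gem: the path `0-1-2-3` plus a dominating vertex `4`. -/
def gemGraph : SimpleGraph (Fin 5) :=
  graphOfList 5 [(0,1),(1,2),(2,3),(0,4),(1,4),(2,4),(3,4)]

/-- The diamond `K₄` minus one edge. -/
def diamondGraph : SimpleGraph (Fin 4) := graphOfList 4 [(0,1),(0,2),(0,3),(1,2),(1,3)]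

/-- A set `U` is homogeneous in `G` if every vertex outside `U` is adjacent to all of
`U` or to none of `U`. -/
def SimpleGraph.Homogeneous {V : Type*} (G : SimpleGraph V) (U : Set V) : Prop :=
  ∀ v ∉ U, (∀ u ∈ U, G.Adj v u) ∨ (∀ u ∈ U, ¬ G.Adj v u)

/-- A set of vertices is independent if no two of its vertices are adjacent. -/
def SimpleGraph.IndepSet {V : Type*} (G : SimpleGraph V) (U : Set V) : Prop :=
  ∀ u ∈ U, ∀ w ∈ U, ¬ G.Adj u w

/-- `v` is a cut-vertex of `G`: its removal separates two vertices that were reachable. -/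
def SimpleGraph.IsCutVertex {V : Type*} (G : SimpleGraph V) (v : V) : Prop :=
  ∃ (x y : V) (hx : x ≠ v) (hy : y ≠ v), G.Reachable x y ∧
    ¬ (G.induce {u : V | u ≠ v}).Reachable ⟨x, hx⟩ ⟨y, hy⟩

/-- A block of `G`: a maximal set of vertices inducing a connected subgraph without
a cut-vertex. -/
def SimpleGraph.IsBlock {V : Type*} (G : SimpleGraph V) (B : Set V) : Prop :=
  (G.induce B).Connected ∧ (∀ v, ¬ (G.induce B).IsCutVertex v) ∧
    ∀ C : Set V, B ⊆ C → (G.induce C).Connected → (∀ v, ¬ (G.induce C).IsCutVertex v) → B = C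

namespace SimpleGraph.Homogeneous

variable {V : Type*} {G : SimpleGraph V} {U : Set V}

theorem adj_iff_adj (hU : G.Homogeneous U) {a b c : V} (ha : a ∈ U) (hb : b ∈ U) (hc : c ∉ U) :
    G.Adj a c ↔ G.Adj b c := by
  rcases hU c hc with hall | hnone
  · exact iff_of_true (hall a ha).symm (hall b hb).symm
  · exact iff_of_false (fun h => hnone a ha h.symm) (fun h => hnone b hb h.symm)

theorem mem_sym2_of_gallai_adj (hU : G.Homogeneous U) {e f : G.edgeSet} (hef : G.gallai.Adj e f)
    (he : (e : Sym2 V) ∈ U.sym2) : (f : Sym2 V) ∈ U.sym2 := by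
  obtain ⟨-, a, b, c, hab, hac, hbc⟩ := hef
  rw [hab, Set.mk_mem_sym2_iff] at he
  have hGac : G.Adj a c := by simpa [hac] using f.2
  rw [hac, Set.mk_mem_sym2_iff]
  refine ⟨he.1, by_contra fun hc => hbc ?_⟩
  exact (hU.adj_iff_adj he.1 he.2 hc).1 hGac

theorem mem_sym2_of_gallai_reachable (hU : G.Homogeneous U) {e f : G.edgeSet}
    (hef : G.gallai.Reachable e f) (he : (e : Sym2 V) ∈ U.sym2) : (f : Sym2 V) ∈ U.sym2 := by
  rw [reachable_iff_reflTransGen] at hef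
  induction hef with
  | refl => exact he
  | tail _ hadj ih => exact hU.mem_sym2_of_gallai_adj hadj ih

end SimpleGraph.Homogeneous

/-- If `U` is homogeneous in `G`, `uv` is an edge inside `U` and `xy` is an edge with
`x ∉ U`, then `uv` and `xy` lie in distinct components of `Γ(G)`. -/
theorem stmt_3 {V : Type*} (G : SimpleGraph V) (U : Set V) (hU : G.Homogeneous U)
    {u v x y : V} (huv : G.Adj u v) (hu : u ∈ U) (hv : v ∈ U)
    (hxy : G.Adj x y) (hx : x ∉ U) :
    ¬ G.gallai.Reachable ⟨s(u, v), G.mem_edgeSet.mpr huv⟩ ⟨s(x, y), G.mem_edgeSet.mpr hxy⟩ :=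
  fun h => hx (hU.mem_sym2_of_gallai_reachable h ⟨hu, hv⟩).1
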